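/- Assume that for every (t,ω) ∈ [0,T] × Ω there exists ω̂ ∈ 𝒜(t,ω) such that X_u(ω̂) < X_t(ω) for all u ∈ (t,T]. Then σ* is the unique perfect stopping time: σ* is perfect, and any stopping time τ with τ(ω) ≠ σ*(ω) for some ω ∈ Ω is not perfect (if τ(ω) < σ*(ω) then τ fails Pareto optimality with respect to 𝒜(τ(ω),ω), and if τ(ω) > σ*(ω) then τ fails optimality with respect to 𝒜(σ*(ω),ω)). -/

import Mathlib

open Set

noncomputable section

namespace SellingRegret

/-- Running maximum `X*_t(ω) = sup_{s ∈ [0,t]} X_s(ω)`, where `X_s(ω) = ω s`. -/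
def Mstar (ω : ℝ → ℝ) (t : ℝ) : ℝ :=
  sSup (ω '' Set.Icc 0 t)

/-- `𝒜(t,ω)`: the trajectories in `Ω` agreeing with `ω` on `[0,t]`. -/
def Hist (Ω : Set (ℝ → ℝ)) (t : ℝ) (ω : ℝ → ℝ) : Set (ℝ → ℝ) :=
  {ω' ∈ Ω | ∀ s ∈ Set.Icc 0 t, ω' s = ω s}

/-- A stopping time: a map `τ : Ω → [0,T]` such that whenever `τ(ω) ≤ t` and
`ω'` agrees with `ω` on `[0,t]`, one has `τ(ω') = τ(ω)`. -/
def IsStoppingTime (T : ℝ) (Ω : Set (ℝ → ℝ)) (τ : (ℝ → ℝ) → ℝ) : Prop :=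
  (∀ ω ∈ Ω, τ ω ∈ Set.Icc 0 T) ∧
  ∀ ω ∈ Ω, ∀ t ∈ Set.Icc 0 T, τ ω ≤ t →
    ∀ ω' ∈ Ω, (∀ s ∈ Set.Icc 0 t, ω' s = ω s) → τ ω' = τ ω

/-- Estimated regret `R(t,ω;τ,ω') = max{X*_{τ(ω')}(ω') − X_{τ(ω')}(ω'), ψ(τ(ω'),ω')}`
(it depends only on `τ` and `ω'`). -/
def regret (ψ : ℝ → (ℝ → ℝ) → ℝ) (τ : (ℝ → ℝ) → ℝ) (ω' : ℝ → ℝ) : ℝ :=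
  max (Mstar ω' (τ ω') - ω' (τ ω')) (ψ (τ ω') ω')

/-- Worst-case estimated regret `ℛ(t,ω;τ) = sup_{ω' ∈ 𝒜(t,ω)} R(t,ω;τ,ω')`,
valued in `[0,∞]`. -/
def worstRegret (Ω : Set (ℝ → ℝ)) (ψ : ℝ → (ℝ → ℝ) → ℝ)
    (t : ℝ) (ω : ℝ → ℝ) (τ : (ℝ → ℝ) → ℝ) : ENNReal :=
  ⨆ ω' ∈ Hist Ω t ω, ENNReal.ofReal (regret ψ τ ω')

/-- `σ*(ω) = inf {s ∈ [0,T] : X*_s(ω) − X_s(ω) ≥ ψ(s,ω)}`. -/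
def sigmaStar (T : ℝ) (ψ : ℝ → (ℝ → ℝ) → ℝ) (ω : ℝ → ℝ) : ℝ :=
  sInf {s ∈ Set.Icc 0 T | ψ s ω ≤ Mstar ω s - ω s}

/-- `τ ∈ 𝒯_t(ω)`: `τ(ω') ≥ t` for all `ω' ∈ 𝒜(t,ω)`. -/
def Admissible (Ω : Set (ℝ → ℝ)) (t : ℝ) (ω : ℝ → ℝ) (τ : (ℝ → ℝ) → ℝ) : Prop :=
  ∀ ω' ∈ Hist Ω t ω, t ≤ τ ω'

/-- `σ` is optimal with respect to `𝒜(t,ω)`. -/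
def OptimalAt (T : ℝ) (Ω : Set (ℝ → ℝ)) (ψ : ℝ → (ℝ → ℝ) → ℝ)
    (t : ℝ) (ω : ℝ → ℝ) (σ : (ℝ → ℝ) → ℝ) : Prop :=
  IsStoppingTime T Ω σ ∧ Admissible Ω t ω σ ∧
  ∀ τ, IsStoppingTime T Ω τ → Admissible Ω t ω τ →
    worstRegret Ω ψ t ω σ ≤ worstRegret Ω ψ t ω τ

/-- `σ` is Pareto optimal with respect to `𝒜(t,ω)`. -/
def ParetoOptimalAt (T : ℝ) (Ω : Set (ℝ → ℝ)) (ψ : ℝ → (ℝ → ℝ) → ℝ)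
    (t : ℝ) (ω : ℝ → ℝ) (σ : (ℝ → ℝ) → ℝ) : Prop :=
  IsStoppingTime T Ω σ ∧ Admissible Ω t ω σ ∧
  ¬ ∃ τ, IsStoppingTime T Ω τ ∧ Admissible Ω t ω τ ∧
      (∀ ω' ∈ Hist Ω t ω, regret ψ τ ω' ≤ regret ψ σ ω') ∧
      ∃ ω'' ∈ Hist Ω t ω, regret ψ τ ω'' < regret ψ σ ω''

/-- `σ` is perfect: optimal and Pareto optimal with respect to `𝒜(t,ω)`
whenever it is admissible for `𝒜(t,ω)`. -/
def Perfect (T : ℝ) (Ω : Set (ℝ → ℝ)) (ψ : ℝ → (ℝ → ℝ) → ℝ)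
    (σ : (ℝ → ℝ) → ℝ) : Prop :=
  IsStoppingTime T Ω σ ∧
  ∀ t ∈ Set.Icc 0 T, ∀ ω ∈ Ω, Admissible Ω t ω σ →
    OptimalAt T Ω ψ t ω σ ∧ ParetoOptimalAt T Ω ψ t ω σ

/-- Conditions (A) and (B) of Theorem 2 for a stopping time `σ`. -/
def CondAB (T : ℝ) (Ω : Set (ℝ → ℝ)) (ψ : ℝ → (ℝ → ℝ) → ℝ)
    (σ : (ℝ → ℝ) → ℝ) : Prop :=
  ∀ τ, IsStoppingTime T Ω τ → ∀ ω ∈ Ω,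
    (σ ω < τ ω → ∃ ω' ∈ Hist Ω (σ ω) ω, regret ψ σ ω' < regret ψ τ ω') ∧
    (τ ω < σ ω → ∀ ω' ∈ Hist Ω (τ ω) ω, regret ψ σ ω' < regret ψ τ ω')

/-- `Ω = C([0,T],ℝ)`: all trajectories continuous on `[0,T]`. -/
def OmegaC (T : ℝ) : Set (ℝ → ℝ) :=
  {ω | ContinuousOn ω (Set.Icc 0 T)}

/-- The two-sided Lipschitz corridor of Example 2:
`−L₁(t−s) ≤ ω(t) − ω(s) ≤ L₂(t−s)` for `0 ≤ s ≤ t ≤ T`. -/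
def OmegaL (T L₁ L₂ : ℝ) : Set (ℝ → ℝ) :=
  {ω | ∀ s t : ℝ, 0 ≤ s → s ≤ t → t ≤ T →
    -L₁ * (t - s) ≤ ω t - ω s ∧ ω t - ω s ≤ L₂ * (t - s)}

/-!
Before `σ*` the drawdown is below `ψ`, so stopping there costs `ψ`, which exceeds `ψ(σ*)`
because `ψ` is strictly decreasing. At `σ*` the drawdown has just caught up with `ψ` (both are
continuous, and `σ* > 0` since `ψ(0) > ψ(T) = 0` while the drawdown starts at `0`), so the regret
of `σ*` is the common value. After `σ*` the reaching assumption provides a continuation staying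
below the price at `σ*`, along which any later stop has a strictly larger drawdown. These two
comparisons are conditions (A) and (B) of `CondAB`, and they alone make a stopping time perfect
and every other stopping time imperfect: stopping early is Pareto dominated by it, stopping late
has a larger worst-case regret.
-/

def drawdown (ω : ℝ → ℝ) (s : ℝ) : ℝ :=
  Mstar ω s - ω s

section RunningMax

variable {T s t u : ℝ} {ω ω' : ℝ → ℝ}

lemma bddAbove_image_Icc (hω : ContinuousOn ω (Icc 0 T)) (ht : t ≤ T) :
    BddAbove (ω '' Icc 0 t) :=
  (isCompact_Icc.image_of_continuousOn (hω.mono (Icc_subset_Icc_right ht))).bddAbove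

lemma le_Mstar (hω : ContinuousOn ω (Icc 0 T)) (ht : t ≤ T) (hs : s ∈ Icc 0 t) :
    ω s ≤ Mstar ω t :=
  le_csSup (bddAbove_image_Icc hω ht) (mem_image_of_mem ω hs)

lemma Mstar_mono (hω : ContinuousOn ω (Icc 0 T)) (hs : 0 ≤ s) (hst : s ≤ t) (ht : t ≤ T) :
    Mstar ω s ≤ Mstar ω t :=
  csSup_le_csSup (bddAbove_image_Icc hω ht) ((nonempty_Icc.mpr hs).image ω)
    (image_mono (Icc_subset_Icc_right hst))

lemma Mstar_congr (h : ∀ u ∈ Icc 0 t, ω' u = ω u) (hst : s ≤ t) : Mstar ω' s = Mstar ω s :=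
  congrArg sSup (image_congr fun u hu => h u ⟨hu.1, hu.2.trans hst⟩)

lemma drawdown_congr (h : ∀ u ∈ Icc 0 t, ω' u = ω u) (hs : s ∈ Icc 0 t) :
    drawdown ω' s = drawdown ω s := by
  rw [drawdown, drawdown, Mstar_congr h hs.2, h s hs]

lemma drawdown_zero (ω : ℝ → ℝ) : drawdown ω 0 = 0 := by
  simp [drawdown, Mstar]

lemma drawdown_nonneg (hω : ContinuousOn ω (Icc 0 T)) (hs : s ∈ Icc 0 T) : 0 ≤ drawdown ω s :=
  sub_nonneg.mpr (le_Mstar hω hs.2 ⟨hs.1, le_rfl⟩)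

-- On `[0,T]`, `Mstar ω s` is the supremum over the fixed compact `[0,T]` of the jointly
-- continuous `u ↦ ω (min u s)`, once `ω` is extended continuously to `ℝ`.
lemma continuousOn_Mstar (hω : ContinuousOn ω (Icc 0 T)) : ContinuousOn (Mstar ω) (Icc 0 T) := by
  rcases lt_or_ge T 0 with hT | hT
  · simp [Icc_eq_empty_of_lt hT]
  set g : ℝ → ℝ := fun x => ω (projIcc 0 T hT x)
  have hg : Continuous g :=
    hω.comp_continuous (continuous_subtype_val.comp continuous_projIcc)
      fun x => (projIcc 0 T hT x).2
  have hsup : Continuous fun s => sSup ((fun u => g (min u s)) '' Icc 0 T) :=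
    isCompact_Icc.continuous_sSup (by fun_prop)
  refine hsup.continuousOn.congr fun s hs => ?_
  have himage : (fun u => g (min u s)) '' Icc 0 T = ω '' Icc 0 s := by
    ext y
    constructor
    · rintro ⟨u, hu, rfl⟩
      have hmem : min u s ∈ Icc 0 T := ⟨le_min hu.1 hs.1, (min_le_right _ _).trans hs.2⟩
      exact ⟨min u s, ⟨hmem.1, min_le_right _ _⟩, by simp [g, projIcc_of_mem hT hmem]⟩
    · rintro ⟨u, hu, rfl⟩
      refine ⟨u, ⟨hu.1, hu.2.trans hs.2⟩, ?_⟩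
      simp [g, min_eq_left hu.2, projIcc_of_mem hT ⟨hu.1, hu.2.trans hs.2⟩]
  simp only [Mstar, himage]

lemma continuousOn_drawdown (hω : ContinuousOn ω (Icc 0 T)) :
    ContinuousOn (drawdown ω) (Icc 0 T) :=
  (continuousOn_Mstar hω).sub hω

lemma drawdown_lt_drawdown (hω' : ContinuousOn ω' (Icc 0 T)) (h : ∀ u ∈ Icc 0 t, ω' u = ω u)
    (ht : 0 ≤ t) (htu : t ≤ u) (huT : u ≤ T) (hdrop : ω' u < ω t) :
    drawdown ω t < drawdown ω' u := by
  have := Mstar_mono hω' ht htu huT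
  rw [Mstar_congr h le_rfl] at this
  rw [drawdown, drawdown]
  linarith

end RunningMax

section StoppingTimes

variable {T t s : ℝ} {Ω : Set (ℝ → ℝ)} {ψ : ℝ → (ℝ → ℝ) → ℝ} {ω ω' ω'' : ℝ → ℝ}
  {σ τ : (ℝ → ℝ) → ℝ}

lemma mem_hist_self (hω : ω ∈ Ω) : ω ∈ Hist Ω t ω :=
  ⟨hω, fun _ _ => rfl⟩

lemma mem_hist_comm (hω : ω ∈ Ω) (h : ω' ∈ Hist Ω t ω) : ω ∈ Hist Ω t ω' :=
  ⟨hω, fun u hu => (h.2 u hu).symm⟩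

lemma hist_anti (hst : s ≤ t) : Hist Ω t ω ⊆ Hist Ω s ω :=
  fun _ h => ⟨h.1, fun u hu => h.2 u ⟨hu.1, hu.2.trans hst⟩⟩

lemma mem_hist_trans (hts : t ≤ s) (h : ω' ∈ Hist Ω t ω) (h' : ω'' ∈ Hist Ω s ω') :
    ω'' ∈ Hist Ω t ω :=
  ⟨h'.1, fun u hu => (h'.2 u ⟨hu.1, hu.2.trans hts⟩).trans (h.2 u hu)⟩

namespace IsStoppingTime

lemma apply_eq (hτ : IsStoppingTime T Ω τ) (hω : ω ∈ Ω) (h : ω' ∈ Hist Ω t ω)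
    (hle : τ ω ≤ t) (htT : t ≤ T) : τ ω' = τ ω :=
  hτ.2 ω hω t ⟨(hτ.1 ω hω).1.trans hle, htT⟩ hle ω' h.1 h.2

lemma le_apply (hτ : IsStoppingTime T Ω τ) (hω : ω ∈ Ω) (h : ω' ∈ Hist Ω t ω)
    (hle : t ≤ τ ω) : t ≤ τ ω' := by
  by_contra! hlt
  have := hτ.apply_eq h.1 (mem_hist_comm hω h) hlt.le (hle.trans (hτ.1 ω hω).2)
  linarith

lemma lt_apply (hτ : IsStoppingTime T Ω τ) (hω : ω ∈ Ω) (h : ω' ∈ Hist Ω t ω)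
    (hlt : t < τ ω) : t < τ ω' := by
  by_contra! hle
  have := hτ.apply_eq h.1 (mem_hist_comm hω h) hle (hlt.le.trans (hτ.1 ω hω).2)
  linarith

lemma admissible (hτ : IsStoppingTime T Ω τ) (hω : ω ∈ Ω) (ht : t ≤ τ ω) :
    Admissible Ω t ω τ :=
  fun _ h => hτ.le_apply hω h ht

lemma regret_eq
    (hψh : ∀ t ∈ Icc 0 T, ∀ ω ∈ Ω, ∀ ω' ∈ Hist Ω t ω, ψ t ω' = ψ t ω)
    (hσ : IsStoppingTime T Ω σ) (hω : ω ∈ Ω) (h : ω' ∈ Hist Ω (σ ω) ω) :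
    regret ψ σ ω' = regret ψ σ ω := by
  have hσI := hσ.1 ω hω
  have hσω' : σ ω' = σ ω := hσ.apply_eq hω h le_rfl hσI.2
  change max (drawdown ω' (σ ω')) _ = max (drawdown ω (σ ω)) _
  rw [hσω', drawdown_congr h.2 ⟨hσI.1, le_rfl⟩, hψh _ hσI ω hω ω' h]

end IsStoppingTime

lemma worstRegret_le_worstRegret
    (h : ∀ ω' ∈ Hist Ω t ω, ∃ ω'' ∈ Hist Ω t ω, regret ψ σ ω' ≤ regret ψ τ ω'') :
    worstRegret Ω ψ t ω σ ≤ worstRegret Ω ψ t ω τ := by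
  refine iSup₂_le fun ω' hω' => ?_
  obtain ⟨ω'', hω'', hle⟩ := h ω' hω'
  exact le_iSup₂_of_le ω'' hω'' (ENNReal.ofReal_le_ofReal hle)

lemma worstRegret_le_ofReal {c : ℝ} (h : ∀ ω' ∈ Hist Ω t ω, regret ψ σ ω' ≤ c) :
    worstRegret Ω ψ t ω σ ≤ ENNReal.ofReal c :=
  iSup₂_le fun ω' hω' => ENNReal.ofReal_le_ofReal (h ω' hω')

lemma ofReal_regret_le_worstRegret (h : ω' ∈ Hist Ω t ω) :
    ENNReal.ofReal (regret ψ σ ω') ≤ worstRegret Ω ψ t ω σ :=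
  le_iSup₂_of_le ω' h le_rfl

end StoppingTimes

namespace CondAB

variable {T : ℝ} {Ω : Set (ℝ → ℝ)} {ψ : ℝ → (ℝ → ℝ) → ℝ} {σ τ : (ℝ → ℝ) → ℝ} {ω : ℝ → ℝ}
  {t : ℝ}

lemma regret_le (hAB : CondAB T Ω ψ σ) (hτ : IsStoppingTime T Ω τ) (hω : ω ∈ Ω)
    (h : τ ω ≤ σ ω) : regret ψ σ ω ≤ regret ψ τ ω := by
  rcases h.lt_or_eq with hlt | heq
  · exact ((hAB τ hτ ω hω).2 hlt ω (mem_hist_self hω)).le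
  · simp only [regret, heq, le_rfl]

lemma optimalAt (hAB : CondAB T Ω ψ σ) (hσ : IsStoppingTime T Ω σ)
    (hψh : ∀ t ∈ Icc 0 T, ∀ ω ∈ Ω, ∀ ω' ∈ Hist Ω t ω, ψ t ω' = ψ t ω)
    (hadm : Admissible Ω t ω σ) : OptimalAt T Ω ψ t ω σ := by
  refine ⟨hσ, hadm, fun τ hτ _ => worstRegret_le_worstRegret fun ω' hω' => ?_⟩
  rcases le_or_gt (τ ω') (σ ω') with hle | hlt
  · exact ⟨ω', hω', hAB.regret_le hτ hω'.1 hle⟩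
  · obtain ⟨ω'', hω'', hreg⟩ := (hAB τ hτ ω' hω'.1).1 hlt
    refine ⟨ω'', mem_hist_trans (hadm ω' hω') hω' hω'', ?_⟩
    rw [← hσ.regret_eq hψh hω'.1 hω'']
    exact hreg.le

lemma paretoOptimalAt (hAB : CondAB T Ω ψ σ) (hσ : IsStoppingTime T Ω σ)
    (hadm : Admissible Ω t ω σ) : ParetoOptimalAt T Ω ψ t ω σ := by
  refine ⟨hσ, hadm, ?_⟩
  rintro ⟨τ, hτ, -, hdom, ω', hω', hlt⟩
  rcases le_or_gt (τ ω') (σ ω') with hle | hgt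
  · exact (hAB.regret_le hτ hω'.1 hle).not_gt hlt
  · obtain ⟨ω'', hω'', hreg⟩ := (hAB τ hτ ω' hω'.1).1 hgt
    exact (hdom ω'' (mem_hist_trans (hadm ω' hω') hω' hω'')).not_gt hreg

lemma perfect (hAB : CondAB T Ω ψ σ) (hσ : IsStoppingTime T Ω σ)
    (hψh : ∀ t ∈ Icc 0 T, ∀ ω ∈ Ω, ∀ ω' ∈ Hist Ω t ω, ψ t ω' = ψ t ω) :
    Perfect T Ω ψ σ :=
  ⟨hσ, fun _ _ _ _ hadm => ⟨hAB.optimalAt hσ hψh hadm, hAB.paretoOptimalAt hσ hadm⟩⟩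

lemma not_paretoOptimalAt_of_lt (hAB : CondAB T Ω ψ σ) (hσ : IsStoppingTime T Ω σ)
    (hτ : IsStoppingTime T Ω τ) (hω : ω ∈ Ω) (h : τ ω < σ ω) :
    ¬ ParetoOptimalAt T Ω ψ (τ ω) ω τ := by
  rintro ⟨-, -, hno⟩
  have hbetter := (hAB τ hτ ω hω).2 h
  exact hno ⟨σ, hσ, hσ.admissible hω h.le, fun ω' hω' => (hbetter ω' hω').le,
    ω, mem_hist_self hω, hbetter ω (mem_hist_self hω)⟩

-- The regret of `σ` is constant on `𝒜(σ(ω), ω)`.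
lemma not_optimalAt_of_gt (hAB : CondAB T Ω ψ σ) (hσ : IsStoppingTime T Ω σ)
    (hψnn : ∀ ω ∈ Ω, ∀ t ∈ Icc 0 T, 0 ≤ ψ t ω)
    (hψh : ∀ t ∈ Icc 0 T, ∀ ω ∈ Ω, ∀ ω' ∈ Hist Ω t ω, ψ t ω' = ψ t ω)
    (hτ : IsStoppingTime T Ω τ) (hω : ω ∈ Ω) (h : σ ω < τ ω) :
    ¬ OptimalAt T Ω ψ (σ ω) ω τ := by
  rintro ⟨-, -, hopt⟩
  obtain ⟨ω', hω', hreg⟩ := (hAB τ hτ ω hω).1 h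
  rw [hσ.regret_eq hψh hω hω'] at hreg
  have hnn : 0 ≤ regret ψ σ ω := (hψnn ω hω _ (hσ.1 ω hω)).trans (le_max_right _ _)
  have hupper : worstRegret Ω ψ (σ ω) ω σ ≤ ENNReal.ofReal (regret ψ σ ω) :=
    worstRegret_le_ofReal fun ω'' hω'' => (hσ.regret_eq hψh hω hω'').le
  have := (hopt σ hσ (hσ.admissible hω le_rfl)).trans_lt
    (hupper.trans_lt ((ENNReal.ofReal_lt_ofReal_iff_of_nonneg hnn).mpr hreg))
  exact this.not_ge (ofReal_regret_le_worstRegret hω')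

lemma not_perfect (hAB : CondAB T Ω ψ σ) (hσ : IsStoppingTime T Ω σ)
    (hψnn : ∀ ω ∈ Ω, ∀ t ∈ Icc 0 T, 0 ≤ ψ t ω)
    (hψh : ∀ t ∈ Icc 0 T, ∀ ω ∈ Ω, ∀ ω' ∈ Hist Ω t ω, ψ t ω' = ψ t ω)
    (hτ : IsStoppingTime T Ω τ) (hne : ∃ ω ∈ Ω, τ ω ≠ σ ω) : ¬ Perfect T Ω ψ τ := by
  rintro ⟨-, hperf⟩
  obtain ⟨ω, hω, hne⟩ := hne
  rcases hne.lt_or_gt with hlt | hgt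
  · exact hAB.not_paretoOptimalAt_of_lt hσ hτ hω hlt
      (hperf _ (hτ.1 ω hω) ω hω (hτ.admissible hω le_rfl)).2
  · exact hAB.not_optimalAt_of_gt hσ hψnn hψh hτ hω hgt
      (hperf _ (hσ.1 ω hω) ω hω (hτ.admissible hω hgt.le)).1

end CondAB

def triggerSet (T : ℝ) (ψ : ℝ → (ℝ → ℝ) → ℝ) (ω : ℝ → ℝ) : Set ℝ :=
  {s ∈ Icc 0 T | ψ s ω ≤ drawdown ω s}

section SigmaStar

variable {T s : ℝ} {ψ : ℝ → (ℝ → ℝ) → ℝ} {ω : ℝ → ℝ}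

lemma bddBelow_triggerSet : BddBelow (triggerSet T ψ ω) :=
  ⟨0, fun _ hs => hs.1.1⟩

lemma drawdown_lt_of_lt_sigmaStar (hs : s ∈ Icc 0 T) (h : s < sigmaStar T ψ ω) :
    drawdown ω s < ψ s ω := by
  by_contra! hle
  exact (csInf_le bddBelow_triggerSet ⟨hs, hle⟩).not_gt h

variable (hT : 0 < T) (hω : ContinuousOn ω (Icc 0 T)) (hψT : ψ T ω = 0)
  (hψc : ContinuousOn (fun t => ψ t ω) (Icc 0 T))
  (hψa : StrictAntiOn (fun t => ψ t ω) (Icc 0 T))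
include hT hω hψT hψc

lemma sigmaStar_mem_triggerSet : sigmaStar T ψ ω ∈ triggerSet T ψ ω := by
  have hT_mem : T ∈ triggerSet T ψ ω :=
    ⟨right_mem_Icc.mpr hT.le, hψT ▸ drawdown_nonneg hω (right_mem_Icc.mpr hT.le)⟩
  exact (isClosed_Icc.isClosed_le hψc (continuousOn_drawdown hω)).csInf_mem ⟨T, hT_mem⟩
    bddBelow_triggerSet

lemma sigmaStar_mem_Icc : sigmaStar T ψ ω ∈ Icc 0 T :=
  (sigmaStar_mem_triggerSet hT hω hψT hψc).1

include hψa

lemma sigmaStar_pos : 0 < sigmaStar T ψ ω := by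
  have hmem := sigmaStar_mem_triggerSet hT hω hψT hψc
  refine hmem.1.1.lt_of_ne fun h0 => ?_
  have hψ0 : ψ T ω < ψ 0 ω := hψa (left_mem_Icc.mpr hT.le) (right_mem_Icc.mpr hT.le) hT
  have := hmem.2
  rw [← h0, drawdown_zero] at this
  linarith

lemma drawdown_sigmaStar : drawdown ω (sigmaStar T ψ ω) = ψ (sigmaStar T ψ ω) ω := by
  have hmem := sigmaStar_mem_triggerSet hT hω hψT hψc
  have hpos := sigmaStar_pos hT hω hψT hψc hψa
  have hsub : closure (Ico 0 (sigmaStar T ψ ω)) ⊆ Icc 0 T := by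
    rw [closure_Ico hpos.ne]
    exact Icc_subset_Icc_right hmem.1.2
  refine le_antisymm ?_ hmem.2
  refine le_on_closure (fun s hs => (drawdown_lt_of_lt_sigmaStar ?_ hs.2).le)
    ((continuousOn_drawdown hω).mono hsub) (hψc.mono hsub) ?_
  · exact ⟨hs.1, hs.2.le.trans hmem.1.2⟩
  · rw [closure_Ico hpos.ne]
    exact right_mem_Icc.mpr hpos.le

lemma regret_sigmaStar : regret ψ (sigmaStar T ψ) ω = drawdown ω (sigmaStar T ψ ω) :=
  (congrArg₂ max rfl (drawdown_sigmaStar hT hω hψT hψc hψa).symm).trans (max_self _)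

lemma regret_sigmaStar_lt_of_lt {τ : (ℝ → ℝ) → ℝ} (hτ : τ ω ∈ Icc 0 T)
    (h : τ ω < sigmaStar T ψ ω) : regret ψ (sigmaStar T ψ) ω < regret ψ τ ω :=
  calc regret ψ (sigmaStar T ψ) ω = ψ (sigmaStar T ψ ω) ω := by
        rw [regret_sigmaStar hT hω hψT hψc hψa, drawdown_sigmaStar hT hω hψT hψc hψa]
    _ < ψ (τ ω) ω := hψa hτ (sigmaStar_mem_Icc hT hω hψT hψc) h
    _ ≤ regret ψ τ ω := le_max_right _ _

end SigmaStar

section Adapted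

variable {T : ℝ} {Ω : Set (ℝ → ℝ)} {ψ : ℝ → (ℝ → ℝ) → ℝ}

lemma triggerSet_congr (hψh : ∀ t ∈ Icc 0 T, ∀ ω ∈ Ω, ∀ ω' ∈ Hist Ω t ω, ψ t ω' = ψ t ω)
    {t s : ℝ} {ω ω' : ℝ → ℝ} (hω : ω ∈ Ω) (h : ω' ∈ Hist Ω t ω) (hst : s ≤ t) :
    s ∈ triggerSet T ψ ω' ↔ s ∈ triggerSet T ψ ω := by
  refine and_congr_right fun hs => ?_
  rw [hψh s hs ω hω ω' (hist_anti hst h), drawdown_congr h.2 ⟨hs.1, hst⟩]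

variable (hT : 0 < T) (hΩ : ∀ ω ∈ Ω, ContinuousOn ω (Icc 0 T))
  (hψT : ∀ ω ∈ Ω, ψ T ω = 0)
  (hψc : ∀ ω ∈ Ω, ContinuousOn (fun t => ψ t ω) (Icc 0 T))
  (hψh : ∀ t ∈ Icc 0 T, ∀ ω ∈ Ω, ∀ ω' ∈ Hist Ω t ω, ψ t ω' = ψ t ω)
include hT hΩ hψT hψc hψh

lemma isStoppingTime_sigmaStar : IsStoppingTime T Ω (sigmaStar T ψ) := by
  have hmem : ∀ ω ∈ Ω, sigmaStar T ψ ω ∈ triggerSet T ψ ω := fun ω hω =>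
    sigmaStar_mem_triggerSet hT (hΩ ω hω) (hψT ω hω) (hψc ω hω)
  refine ⟨fun ω hω => (hmem ω hω).1, fun ω hω t _ hle ω' hω' hagree => ?_⟩
  have h : ω' ∈ Hist Ω t ω := ⟨hω', hagree⟩
  have hle' : sigmaStar T ψ ω' ≤ sigmaStar T ψ ω :=
    csInf_le bddBelow_triggerSet ((triggerSet_congr hψh hω h hle).mpr (hmem ω hω))
  exact hle'.antisymm (csInf_le bddBelow_triggerSet
    ((triggerSet_congr hψh hω h (hle'.trans hle)).mp (hmem ω' hω')))

lemma condAB_sigmaStar (hψa : ∀ ω ∈ Ω, StrictAntiOn (fun t => ψ t ω) (Icc 0 T))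
    (hreach : ∀ t ∈ Icc 0 T, ∀ ω ∈ Ω, ∃ ωh ∈ Hist Ω t ω, ∀ u, t < u → u ≤ T → ωh u < ω t) :
    CondAB T Ω ψ (sigmaStar T ψ) := by
  have hσ := isStoppingTime_sigmaStar hT hΩ hψT hψc hψh
  intro τ hτ ω hω
  constructor
  · intro hlt
    obtain ⟨ωh, hωh, hdrop⟩ := hreach _ (hσ.1 ω hω) ω hω
    have hτωh : sigmaStar T ψ ω < τ ωh := hτ.lt_apply hω hωh hlt
    have hτT : τ ωh ≤ T := (hτ.1 ωh hωh.1).2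
    refine ⟨ωh, hωh, ?_⟩
    calc regret ψ (sigmaStar T ψ) ωh = drawdown ω (sigmaStar T ψ ω) := by
          rw [hσ.regret_eq hψh hω hωh,
            regret_sigmaStar hT (hΩ ω hω) (hψT ω hω) (hψc ω hω) (hψa ω hω)]
      _ < drawdown ωh (τ ωh) := drawdown_lt_drawdown (hΩ ωh hωh.1) hωh.2 (hσ.1 ω hω).1
          hτωh.le hτT (hdrop _ hτωh hτT)
      _ ≤ regret ψ τ ωh := le_max_left _ _
  · intro hlt ω' hω'
    have hτω' : τ ω' = τ ω := hτ.apply_eq hω hω' le_rfl (hτ.1 ω hω).2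
    refine regret_sigmaStar_lt_of_lt hT (hΩ ω' hω'.1) (hψT ω' hω'.1) (hψc ω' hω'.1)
      (hψa ω' hω'.1) (hτ.1 ω' hω'.1) ?_
    rw [hτω']
    exact hσ.lt_apply hω hω' hlt

end Adapted

/-- Theorem 1: under the reaching assumption, `σ*` is the unique
perfect stopping time: `σ*` is perfect, and any stopping time `τ` with
`τ(ω) ≠ σ*(ω)` for some `ω ∈ Ω` is not perfect (if `τ(ω) < σ*(ω)` then `τ`
fails Pareto optimality with respect to `𝒜(τ(ω),ω)`, and if `τ(ω) > σ*(ω)`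
then `τ` fails optimality with respect to `𝒜(σ*(ω),ω)`). -/
theorem stmt8 (T : ℝ) (hT : 0 < T) (Ω : Set (ℝ → ℝ))
    (hΩ : ∀ ω ∈ Ω, ContinuousOn ω (Set.Icc 0 T))
    (ψ : ℝ → (ℝ → ℝ) → ℝ)
    (hψT : ∀ ω ∈ Ω, ψ T ω = 0)
    (hψnn : ∀ ω ∈ Ω, ∀ t ∈ Set.Icc 0 T, 0 ≤ ψ t ω)
    (hψc : ∀ ω ∈ Ω, ContinuousOn (fun t => ψ t ω) (Set.Icc 0 T))
    (hψa : ∀ ω ∈ Ω, StrictAntiOn (fun t => ψ t ω) (Set.Icc 0 T))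
    (hψh : ∀ t ∈ Set.Icc 0 T, ∀ ω ∈ Ω, ∀ ω' ∈ Hist Ω t ω, ψ t ω' = ψ t ω)
    (hreach : ∀ t ∈ Set.Icc 0 T, ∀ ω ∈ Ω,
      ∃ ωh ∈ Hist Ω t ω, ∀ u, t < u → u ≤ T → ωh u < ω t) :
    Perfect T Ω ψ (sigmaStar T ψ) ∧
    (∀ τ, IsStoppingTime T Ω τ → ∀ ω ∈ Ω,
      (τ ω < sigmaStar T ψ ω → ¬ ParetoOptimalAt T Ω ψ (τ ω) ω τ) ∧
      (sigmaStar T ψ ω < τ ω → ¬ OptimalAt T Ω ψ (sigmaStar T ψ ω) ω τ)) ∧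
    ∀ τ, IsStoppingTime T Ω τ → (∃ ω ∈ Ω, τ ω ≠ sigmaStar T ψ ω) →
      ¬ Perfect T Ω ψ τ := by
  have hσ := isStoppingTime_sigmaStar hT hΩ hψT hψc hψh
  have hAB := condAB_sigmaStar hT hΩ hψT hψc hψh hψa hreach
  exact ⟨hAB.perfect hσ hψh,
    fun τ hτ ω hω => ⟨hAB.not_paretoOptimalAt_of_lt hσ hτ hω,
      hAB.not_optimalAt_of_gt hσ hψnn hψh hτ hω⟩,
    fun τ hτ => hAB.not_perfect hσ hψnn hψh hτ⟩

end SellingRegret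

end
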